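/- Suppose (x*, X*) with X* = x*x*ᵀ is an optimal solution of UC^CPP with optimal value v* = Σ_{g,t}(c^p_g p*_{gt} + c^u_g u*_{gt}). Suppose (λ, Λ, φ, Φ, δ, Ω) is feasible for the dual UC^COP (so by weak conic duality its objective Σ_t(d_tλ_t + d_t²Λ_t + Σ_{j,g}(b_{jgt}φ_{jgt} + b_{jgt}²Φ_{jgt})) is at most v*) and in addition satisfies the per-generator revenue-adequacy constraints R_g ≥ C_g for every g ∈ G, where R_g = Σ_{t∈T}(p*_{gt}λ_t + (p*_{gt})²Λ_t + Σ_{g'≠g} p*_{gt}p*_{g't}Λ_t + Σ_j(φ_{jgt}a_{jgt}ᵀx* + Φ_{jgt}Tr(a_{jgt}a_{jgt}ᵀX*))) and C_g = Σ_{t∈T}(c^p_g p*_{gt} + c^u_g u*_{gt}). Then every generator is paid exactly its cost: R_g = C_g for every g ∈ G. -/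

import Mathlib

/-!
Pair the dual equation of `UC^COP` with the bordered primal matrix `[[1, x*ᵀ], [x*, X*]]` under
`(M, N) ↦ Tr(M N)`. This gives weak duality: the primal cost minus the dual objective equals
`Tr(Ω [[1, x*ᵀ], [x*, X*]]) + Σ δ_{gt} (z*_{gt} - X*^{zz}_{gt,gt})`, where the first term is
nonnegative (copositive against completely positive) and the second vanishes by primal
feasibility. The primal constraints also turn the total revenue `Σ_g R_g` into the dual
objective, so `Σ_g R_g ≤ Σ_g C_g`; together with `R_g ≥ C_g` for each `g` this forces
`R_g = C_g`.
-/

open Matrix BigOperators Finset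

/-- The completely positive cone: `M = A * Aᵀ` for some entrywise nonnegative matrix `A`. -/
def IsCP {ι : Type*} [Fintype ι] (M : Matrix ι ι ℝ) : Prop :=
  ∃ (r : ℕ) (A : Matrix ι (Fin r) ℝ), (∀ i j, 0 ≤ A i j) ∧ M = A * Aᵀ

/-- The copositive cone (quadratic-form condition on nonnegative vectors). -/
def IsCopos {ι : Type*} [Fintype ι] (M : Matrix ι ι ℝ) : Prop :=
  ∀ y : ι → ℝ, (∀ i, 0 ≤ y i) → 0 ≤ y ⬝ᵥ (M *ᵥ y)

/-- The bordered matrix `[[1, xᵀ],[x, X]]`. -/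
def border {ι : Type*} (x : ι → ℝ) (X : Matrix ι ι ℝ) :
    Matrix (Unit ⊕ ι) (Unit ⊕ ι) ℝ :=
  Matrix.fromBlocks 1 (Matrix.of fun _ j => x j) (Matrix.of fun i _ => x i) X

/-- Bordered matrix `[[0, vᵀ/2],[v/2, 0]]` so that `Tr(linMat v * border x X) = vᵀx`. -/
noncomputable def linMat {ι : Type*} (v : ι → ℝ) : Matrix (Unit ⊕ ι) (Unit ⊕ ι) ℝ :=
  Matrix.fromBlocks 0 (Matrix.of fun _ j => v j / 2) (Matrix.of fun i _ => v i / 2) 0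

/-- Bordered matrix `[[0,0],[0, v vᵀ]]` so that `Tr(quadMat v * border x X) = vᵀXv`. -/
def quadMat {ι : Type*} (v : ι → ℝ) : Matrix (Unit ⊕ ι) (Unit ⊕ ι) ℝ :=
  Matrix.fromBlocks 0 0 0 (Matrix.vecMulVec v v)

/-- Bordered matrix `B_k` with `Tr(B_k * border x X) = x_k - X_kk`. -/
noncomputable def binMat {ι : Type*} [DecidableEq ι] (k : ι) : Matrix (Unit ⊕ ι) (Unit ⊕ ι) ℝ :=
  linMat (Pi.single k 1) - Matrix.fromBlocks 0 0 0 (Matrix.single k k 1)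

/-- Index set of the UC decision vector: startup `u`, commitment `z`, production `p`,
and slacks `ψ`. -/
abbrev UCIdx (G T : Type*) (m : ℕ) : Type _ :=
  (G × T) ⊕ (G × T) ⊕ (G × T) ⊕ (Fin m × G × T)

section Trace

variable {ι : Type*} [Fintype ι]

theorem Matrix.trace_fromBlocks {κ R : Type*} [Fintype κ] [AddCommMonoid R]
    (A : Matrix κ κ R) (B : Matrix κ ι R) (C : Matrix ι κ R) (D : Matrix ι ι R) :
    (fromBlocks A B C D).trace = A.trace + D.trace := by
  simp [Matrix.trace, Fintype.sum_sum_type]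

theorem trace_linMat_mul_border (x v : ι → ℝ) (X : Matrix ι ι ℝ) :
    (linMat v * border x X).trace = v ⬝ᵥ x := by
  simp [linMat, border, fromBlocks_multiply, Matrix.trace,
    Matrix.mul_apply, dotProduct, ← Finset.sum_add_distrib, ← add_mul]

theorem trace_quadMat_mul_border (x v : ι → ℝ) (X : Matrix ι ι ℝ) :
    (quadMat v * border x X).trace = v ⬝ᵥ (X *ᵥ v) := by
  simp [quadMat, border, fromBlocks_multiply, Matrix.trace_fromBlocks, vecMulVec_mul,
    trace_vecMulVec, dotProduct_mulVec, dotProduct_comm]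

theorem trace_binMat_mul_border [DecidableEq ι] (x : ι → ℝ) (X : Matrix ι ι ℝ) (k : ι) :
    (binMat k * border x X).trace = x k - X k k := by
  rw [binMat, Matrix.sub_mul, Matrix.trace_sub, trace_linMat_mul_border]
  simp [border, fromBlocks_multiply, Matrix.trace_fromBlocks, trace_single_mul]

theorem IsCopos.trace_mul_nonneg {Ω M : Matrix ι ι ℝ} (hΩ : IsCopos Ω) (hM : IsCP M) :
    0 ≤ (Ω * M).trace := by
  obtain ⟨r, A, hA, rfl⟩ := hM
  rw [← Matrix.mul_assoc, Matrix.trace_mul_comm]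
  refine Finset.sum_nonneg fun k _ => ?_
  simpa [Matrix.mul_apply, dotProduct, mulVec, Finset.mul_sum, mul_comm, mul_left_comm]
    using hΩ (fun i => A i k) (fun i => hA i k)

end Trace

variable {G T : Type*} {m : ℕ}

def idxU (g : G) (t : T) : UCIdx G T m := Sum.inl (g, t)
def idxZ (g : G) (t : T) : UCIdx G T m := Sum.inr (Sum.inl (g, t))
def idxP (g : G) (t : T) : UCIdx G T m := Sum.inr (Sum.inr (Sum.inl (g, t)))

section

variable [Fintype G] [DecidableEq G] [Fintype T] [DecidableEq T]

/-- Coefficient vector of the power balance at time `t` (indicator of `p_{g,t}`). -/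
def hvec (t : T) : UCIdx G T m → ℝ := fun i =>
  match i with
  | Sum.inr (Sum.inr (Sum.inl (_, t'))) => if t' = t then 1 else 0
  | _ => 0

/-- Cost vector of UC: `c^u_g` on `u`-indices and `c^p_g` on `p`-indices. -/
def cvec (cp cu : G → ℝ) : UCIdx G T m → ℝ := fun i =>
  match i with
  | Sum.inl (g, _) => cu g
  | Sum.inr (Sum.inr (Sum.inl (g, _))) => cp g
  | _ => 0

/-- Feasibility for the completely positive reformulation `UC^CPP`. -/
def UCCPPFeas (d : T → ℝ) (a : Fin m → G → T → UCIdx G T m → ℝ)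
    (b : Fin m → G → T → ℝ)
    (x : UCIdx G T m → ℝ) (X : Matrix (UCIdx G T m) (UCIdx G T m) ℝ) : Prop :=
  (∀ t, ∑ g, x (idxP g t) = d t) ∧
  (∀ j g t, a j g t ⬝ᵥ x = b j g t) ∧
  (∀ t, ∑ g, ∑ g', X (idxP g t) (idxP g' t) = (d t) ^ 2) ∧
  (∀ j g t, a j g t ⬝ᵥ (X *ᵥ a j g t) = (b j g t) ^ 2) ∧
  (∀ g t, x (idxZ g t) = X (idxZ g t) (idxZ g t)) ∧
  IsCP (border x X)

/-- Objective of UC: total production plus startup cost. -/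
def UCCost (cp cu : G → ℝ) (x : UCIdx G T m → ℝ) : ℝ :=
  ∑ g, ∑ t, (cp g * x (idxP g t) + cu g * x (idxU g t))

/-- Feasibility for the copositive dual `UC^COP`: the dual matrix equation together
with copositivity of `Ω`. -/
def UCDualFeas (cp cu : G → ℝ) (a : Fin m → G → T → UCIdx G T m → ℝ)
    (lam Lam : T → ℝ) (φ Φ : Fin m → G → T → ℝ) (δ : G → T → ℝ)
    (Ω : Matrix (Unit ⊕ UCIdx G T m) (Unit ⊕ UCIdx G T m) ℝ) : Prop :=
  IsCopos Ω ∧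
  linMat (cvec cp cu)
    - (∑ t, lam t • linMat (hvec t : UCIdx G T m → ℝ))
    - (∑ j, ∑ g, ∑ t, φ j g t • linMat (a j g t))
    - (∑ t, Lam t • quadMat (hvec t : UCIdx G T m → ℝ))
    - (∑ j, ∑ g, ∑ t, Φ j g t • quadMat (a j g t))
    - (∑ g, ∑ t, δ g t • binMat (idxZ g t))
    - Ω = 0

/-- Objective of `UC^COP`. -/
def UCDualObj (d : T → ℝ) (b : Fin m → G → T → ℝ) (lam Lam : T → ℝ)
    (φ Φ : Fin m → G → T → ℝ) : ℝ :=
  ∑ t, (d t * lam t + (d t) ^ 2 * Lam t +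
    ∑ j, ∑ g, (b j g t * φ j g t + (b j g t) ^ 2 * Φ j g t))

omit [DecidableEq G] in
theorem hvec_dotProduct (x : UCIdx G T m → ℝ) (t : T) :
    hvec t ⬝ᵥ x = ∑ g, x (idxP g t) := by
  simp [hvec, dotProduct, Fintype.sum_sum_type, Fintype.sum_prod_type, idxP]

omit [DecidableEq G] in
theorem mulVec_hvec (X : Matrix (UCIdx G T m) (UCIdx G T m) ℝ) (t : T) (i : UCIdx G T m) :
    (X *ᵥ hvec t) i = ∑ g, X i (idxP g t) := by
  rw [mulVec, dotProduct_comm, hvec_dotProduct]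

omit [DecidableEq G] [DecidableEq T] in
theorem cvec_dotProduct (cp cu : G → ℝ) (x : UCIdx G T m → ℝ) :
    cvec cp cu ⬝ᵥ x = UCCost cp cu x := by
  simp [cvec, UCCost, dotProduct, Fintype.sum_sum_type, Fintype.sum_prod_type, idxP, idxU,
    Finset.sum_add_distrib, add_comm]

theorem UCDualObj_le_UCCost {cp cu : G → ℝ} {d : T → ℝ}
    {a : Fin m → G → T → UCIdx G T m → ℝ} {b : Fin m → G → T → ℝ}
    {x : UCIdx G T m → ℝ} {X : Matrix (UCIdx G T m) (UCIdx G T m) ℝ}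
    {lam Lam : T → ℝ} {φ Φ : Fin m → G → T → ℝ} {δ : G → T → ℝ}
    {Ω : Matrix (Unit ⊕ UCIdx G T m) (Unit ⊕ UCIdx G T m) ℝ}
    (hfeas : UCCPPFeas d a b x X) (hdual : UCDualFeas cp cu a lam Lam φ Φ δ Ω) :
    UCDualObj d b lam Lam φ Φ ≤ UCCost cp cu x := by
  obtain ⟨hbal, hlin, hbal_sq, hquad, hbin, hCP⟩ := hfeas
  obtain ⟨hΩ, hzero⟩ := hdual
  have key := congrArg (fun M => (M * border x X).trace) hzero
  simp only [Matrix.sub_mul, Matrix.sum_mul, Matrix.smul_mul, Matrix.zero_mul, trace_sub,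
    trace_sum, trace_smul, trace_zero, smul_eq_mul, trace_linMat_mul_border,
    trace_quadMat_mul_border, trace_binMat_mul_border] at key
  simp only [cvec_dotProduct, hvec_dotProduct, mulVec_hvec, hbal, hlin, hbal_sq, hquad, hbin,
    sub_self, mul_zero, Finset.sum_const_zero] at key
  have hswap (F : Fin m → G → T → ℝ) : ∑ t, ∑ j, ∑ g, F j g t = ∑ j, ∑ g, ∑ t, F j g t := by
    rw [Finset.sum_comm]
    exact Finset.sum_congr rfl fun j _ => Finset.sum_comm
  have hobj : UCDualObj d b lam Lam φ Φ = ∑ t, lam t * d t + ∑ t, Lam t * d t ^ 2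
      + ∑ j, ∑ g, ∑ t, φ j g t * b j g t + ∑ j, ∑ g, ∑ t, Φ j g t * b j g t ^ 2 := by
    simp only [UCDualObj, Finset.sum_add_distrib, hswap, mul_comm (d _), mul_comm (d _ ^ 2),
      mul_comm (b _ _ _), mul_comm (b _ _ _ ^ 2)]
    ring
  linarith [hΩ.trace_mul_nonneg hCP]

def generatorCost (cp cu : G → ℝ) (x : UCIdx G T m → ℝ) (g : G) : ℝ :=
  ∑ t, (cp g * x (idxP g t) + cu g * x (idxU g t))

def generatorRevenue (a : Fin m → G → T → UCIdx G T m → ℝ) (lam Lam : T → ℝ)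
    (φ Φ : Fin m → G → T → ℝ) (x : UCIdx G T m → ℝ)
    (X : Matrix (UCIdx G T m) (UCIdx G T m) ℝ) (g : G) : ℝ :=
  ∑ t, (x (idxP g t) * lam t + x (idxP g t) ^ 2 * Lam t
    + ∑ g' ∈ Finset.univ.erase g, x (idxP g t) * x (idxP g' t) * Lam t
    + ∑ j, (φ j g t * (a j g t ⬝ᵥ x) + Φ j g t * (a j g t ⬝ᵥ (X *ᵥ a j g t))))

omit [DecidableEq T] in
theorem sum_generatorRevenue {d : T → ℝ}
    {a : Fin m → G → T → UCIdx G T m → ℝ} {b : Fin m → G → T → ℝ}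
    {x : UCIdx G T m → ℝ} {X : Matrix (UCIdx G T m) (UCIdx G T m) ℝ}
    {lam Lam : T → ℝ} {φ Φ : Fin m → G → T → ℝ}
    (hbal : ∀ t, ∑ g, x (idxP g t) = d t) (hlin : ∀ j g t, a j g t ⬝ᵥ x = b j g t)
    (hquad : ∀ j g t, a j g t ⬝ᵥ (X *ᵥ a j g t) = b j g t ^ 2) :
    ∑ g, generatorRevenue a lam Lam φ Φ x X g = UCDualObj d b lam Lam φ Φ := by
  have hcross (g : G) (t : T) : x (idxP g t) ^ 2 * Lam t
      + ∑ g' ∈ Finset.univ.erase g, x (idxP g t) * x (idxP g' t) * Lam t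
      = x (idxP g t) * d t * Lam t := by
    rw [← hbal t, Finset.mul_sum, Finset.sum_mul, ← Finset.add_sum_erase _ _ (Finset.mem_univ g)]
    ring
  simp only [generatorRevenue, add_assoc (_ * lam _), hcross, hlin, hquad]
  rw [Finset.sum_comm]
  refine Finset.sum_congr rfl fun t _ => ?_
  rw [Finset.sum_add_distrib, Finset.sum_add_distrib, ← Finset.sum_mul, ← Finset.sum_mul,
    ← Finset.sum_mul, hbal, Finset.sum_comm]
  simp only [mul_comm (φ _ _ _), mul_comm (Φ _ _ _)]
  ring

theorem rcdp_revenue_neutral_each_generator_general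
    (cp cu : G → ℝ) (d : T → ℝ)
    (a : Fin m → G → T → UCIdx G T m → ℝ) (b : Fin m → G → T → ℝ)
    (xs : UCIdx G T m → ℝ) (Xs : Matrix (UCIdx G T m) (UCIdx G T m) ℝ)
    (lam Lam : T → ℝ) (φ Φ : Fin m → G → T → ℝ) (δ : G → T → ℝ)
    (Ω : Matrix (Unit ⊕ UCIdx G T m) (Unit ⊕ UCIdx G T m) ℝ)
    (hfeas : UCCPPFeas d a b xs Xs)
    (hdual : UCDualFeas cp cu a lam Lam φ Φ δ Ω)
    (hadequate : ∀ g : G,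
      (∑ t, (cp g * xs (idxP g t) + cu g * xs (idxU g t))) ≤
        ∑ t, (xs (idxP g t) * lam t + (xs (idxP g t)) ^ 2 * Lam t
          + (∑ g' ∈ Finset.univ.erase g, xs (idxP g t) * xs (idxP g' t) * Lam t)
          + ∑ j, (φ j g t * (a j g t ⬝ᵥ xs)
              + Φ j g t * (a j g t ⬝ᵥ (Xs *ᵥ a j g t))))) :
    ∀ g : G,
      (∑ t, (xs (idxP g t) * lam t + (xs (idxP g t)) ^ 2 * Lam t
          + (∑ g' ∈ Finset.univ.erase g, xs (idxP g t) * xs (idxP g' t) * Lam t)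
          + ∑ j, (φ j g t * (a j g t ⬝ᵥ xs)
              + Φ j g t * (a j g t ⬝ᵥ (Xs *ᵥ a j g t)))))
        = ∑ t, (cp g * xs (idxP g t) + cu g * xs (idxU g t)) := by
  have ⟨hbal, hlin, _, hquad, _⟩ := hfeas
  have hsum : ∑ g, generatorRevenue a lam Lam φ Φ xs Xs g ≤ ∑ g, generatorCost cp cu xs g := by
    rw [sum_generatorRevenue hbal hlin hquad]
    exact UCDualObj_le_UCCost hfeas hdual
  have hcost_eq := (Finset.sum_eq_sum_iff_of_le fun g _ => hadequate g).1
    (le_antisymm (Finset.sum_le_sum fun g _ => hadequate g) hsum)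
  exact fun g => (hcost_eq g (Finset.mem_univ g)).symm

/-- with `(x*, X*) = (x*, x*x*ᵀ)` optimal for `UC^CPP` and a dual
feasible solution of `UC^COP` satisfying the per-generator revenue-adequacy
constraints `R_g ≥ C_g`, every generator is paid exactly its cost: `R_g = C_g`. -/
theorem rcdp_revenue_neutral_each_generator
    (cp cu : G → ℝ) (d : T → ℝ)
    (a : Fin m → G → T → UCIdx G T m → ℝ) (b : Fin m → G → T → ℝ)
    (xs : UCIdx G T m → ℝ) (Xs : Matrix (UCIdx G T m) (UCIdx G T m) ℝ)
    (lam Lam : T → ℝ) (φ Φ : Fin m → G → T → ℝ) (δ : G → T → ℝ)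
    (Ω : Matrix (Unit ⊕ UCIdx G T m) (Unit ⊕ UCIdx G T m) ℝ)
    (hXs : Xs = Matrix.vecMulVec xs xs)
    (hfeas : UCCPPFeas d a b xs Xs)
    (hopt : ∀ y Y, UCCPPFeas d a b y Y → UCCost cp cu xs ≤ UCCost cp cu y)
    (hdual : UCDualFeas cp cu a lam Lam φ Φ δ Ω)
    (hadequate : ∀ g : G,
      (∑ t, (cp g * xs (idxP g t) + cu g * xs (idxU g t))) ≤
        ∑ t, (xs (idxP g t) * lam t + (xs (idxP g t)) ^ 2 * Lam t
          + (∑ g' ∈ Finset.univ.erase g, xs (idxP g t) * xs (idxP g' t) * Lam t)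
          + ∑ j, (φ j g t * (a j g t ⬝ᵥ xs)
              + Φ j g t * (a j g t ⬝ᵥ (Xs *ᵥ a j g t))))) :
    ∀ g : G,
      (∑ t, (xs (idxP g t) * lam t + (xs (idxP g t)) ^ 2 * Lam t
          + (∑ g' ∈ Finset.univ.erase g, xs (idxP g t) * xs (idxP g' t) * Lam t)
          + ∑ j, (φ j g t * (a j g t ⬝ᵥ xs)
              + Φ j g t * (a j g t ⬝ᵥ (Xs *ᵥ a j g t)))))
        = ∑ t, (cp g * xs (idxP g t) + cu g * xs (idxU g t)) :=
  rcdp_revenue_neutral_each_generator_general cp cu d a b xs Xs lam Lam φ Φ δ Ω hfeas hdual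
    hadequate

end
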